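/- Let n be a positive integer, B : Fin n → ℝ with B i > 0, α† ∈ ℝⁿ, μ i = B i * exp(α† i), let M be an n × n real symmetric positive semidefinite matrix, and γ ≥ 0. Define g(α) = ∑ i (B i * exp(α i) − μ i * α i) + (γ/2) * αᵀ M α. If α* is a global minimizer of g over ℝⁿ, then ‖α* − α†‖₂ ≤ γ * ‖M α†‖₂ / c, where c = min over i of B i * min(exp(α* i), exp(α† i)) and ‖·‖₂ denotes the Euclidean norm. -/

import Mathlib

open Real Finset Matrix

private lemma key_exp (a b : ℝ) :
    min (Real.exp a) (Real.exp b) * (a - b) ^ 2 ≤ (Real.exp a - Real.exp b) * (a - b) := by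
  rcases le_total a b with h | h
  · rw [min_eq_left (Real.exp_le_exp.mpr h)]
    have h1 : Real.exp a * Real.exp (b - a) = Real.exp b := by
      rw [← Real.exp_add]; ring_nf
    have h2 := Real.add_one_le_exp (b - a)
    have hx : 0 ≤ b - a := sub_nonneg.mpr h
    have h3 : Real.exp a * (b - a) ≤ Real.exp b - Real.exp a := by
      have h4 := mul_le_mul_of_nonneg_left h2 (Real.exp_pos a).le
      nlinarith
    nlinarith [mul_le_mul_of_nonneg_right h3 hx]
  · rw [min_eq_right (Real.exp_le_exp.mpr h)]
    have h1 : Real.exp b * Real.exp (a - b) = Real.exp a := by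
      rw [← Real.exp_add]; ring_nf
    have h2 := Real.add_one_le_exp (a - b)
    have hx : 0 ≤ a - b := sub_nonneg.mpr h
    have h3 : Real.exp b * (a - b) ≤ Real.exp a - Real.exp b := by
      have h4 := mul_le_mul_of_nonneg_left h2 (Real.exp_pos b).le
      nlinarith
    nlinarith [mul_le_mul_of_nonneg_right h3 hx]

/-- ℓ2-fusion-penalty perturbation bound: the minimizer `α*` of the penalized population
Poisson objective is within `γ‖Mα†‖₂ / c` of the unpenalized minimizer `α†`, where
`c = min_i B i * min (exp (α* i)) (exp (α† i))`. -/
theorem stmt3 (n : ℕ) (hn : 0 < n)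
    (B : Fin n → ℝ) (hB : ∀ i, 0 < B i)
    (αd : Fin n → ℝ) (μ : Fin n → ℝ)
    (hμ : ∀ i, μ i = B i * Real.exp (αd i))
    (M : Matrix (Fin n) (Fin n) ℝ) (hM : M.PosSemidef)
    (γ : ℝ) (hγ : 0 ≤ γ)
    (g : (Fin n → ℝ) → ℝ)
    (hg : ∀ α, g α = ∑ i, (B i * Real.exp (α i) - μ i * α i)
          + γ / 2 * (α ⬝ᵥ (M *ᵥ α)))
    (αs : Fin n → ℝ) (hmin : ∀ α, g αs ≤ g α) :
    haveI : Nonempty (Fin n) := Fin.pos_iff_nonempty.mp hn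
    Real.sqrt (∑ i, (αs i - αd i) ^ 2)
      ≤ γ * Real.sqrt (∑ i, ((M *ᵥ αd) i) ^ 2)
          / Finset.univ.inf' Finset.univ_nonempty
              (fun i => B i * min (Real.exp (αs i)) (Real.exp (αd i))) := by
  haveI : Nonempty (Fin n) := Fin.pos_iff_nonempty.mp hn
  set δ : Fin n → ℝ := fun i => αs i - αd i with hδ
  set c : ℝ := Finset.univ.inf' Finset.univ_nonempty
      (fun i => B i * min (Real.exp (αs i)) (Real.exp (αd i))) with hc
  -- gradient condition at αs, in direction w
  have grad : ∀ w : Fin n → ℝ,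
      (∑ i, (B i * Real.exp (αs i) - μ i) * w i)
        + γ / 2 * ((∑ i, w i * ∑ j, M i j * αs j)
            + ∑ i, αs i * ∑ j, M i j * w j) = 0 := by
    intro w
    set φ : ℝ → ℝ := fun t => g (fun i => αs i + t * w i) with hφ
    have hloc : IsLocalMin φ 0 := by
      apply Filter.Eventually.of_forall
      intro t
      have h0 : (fun i => αs i + (0 : ℝ) * w i) = αs := by
        funext i; ring
      have := hmin (fun i => αs i + t * w i)
      simpa [hφ, h0] using this
    have h1 : ∀ i : Fin n, HasDerivAt (fun t : ℝ => αs i + t * w i) (w i) 0 := by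
      intro i
      simpa using (hasDerivAt_mul_const (w i)).const_add (αs i)
    have hterm : ∀ i : Fin n,
        HasDerivAt (fun t : ℝ => B i * Real.exp (αs i + t * w i) - μ i * (αs i + t * w i))
          (B i * (Real.exp (αs i + 0 * w i) * w i) - μ i * w i) 0 := by
      intro i
      exact (((h1 i).exp).const_mul (B i)).sub ((h1 i).const_mul (μ i))
    have hsum1 : HasDerivAt
        (fun t : ℝ => ∑ i, (B i * Real.exp (αs i + t * w i) - μ i * (αs i + t * w i)))
        (∑ i, (B i * (Real.exp (αs i + 0 * w i) * w i) - μ i * w i)) 0 :=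
      HasDerivAt.fun_sum (fun i _ => hterm i)
    have hS : ∀ i : Fin n, HasDerivAt (fun t : ℝ => ∑ j, M i j * (αs j + t * w j))
        (∑ j, M i j * w j) 0 :=
      fun i => HasDerivAt.fun_sum (fun j _ => (h1 j).const_mul (M i j))
    have hQterm : ∀ i : Fin n,
        HasDerivAt (fun t : ℝ => (αs i + t * w i) * ∑ j, M i j * (αs j + t * w j))
          (w i * (∑ j, M i j * (αs j + 0 * w j)) + (αs i + 0 * w i) * ∑ j, M i j * w j) 0 :=
      fun i => (h1 i).mul (hS i)
    have hQ : HasDerivAt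
        (fun t : ℝ => ∑ i, (αs i + t * w i) * ∑ j, M i j * (αs j + t * w j))
        (∑ i, (w i * (∑ j, M i j * (αs j + 0 * w j)) + (αs i + 0 * w i) * ∑ j, M i j * w j)) 0 :=
      HasDerivAt.fun_sum (fun i _ => hQterm i)
    have hφeq : φ = fun t =>
        (∑ i, (B i * Real.exp (αs i + t * w i) - μ i * (αs i + t * w i)))
          + γ / 2 * ∑ i, (αs i + t * w i) * ∑ j, M i j * (αs j + t * w j) := by
      funext t
      show g (fun i => αs i + t * w i) = _
      rw [hg]
      simp [dotProduct, Matrix.mulVec]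
    have hder : HasDerivAt φ
        ((∑ i, (B i * (Real.exp (αs i + 0 * w i) * w i) - μ i * w i))
          + γ / 2 * ∑ i, (w i * (∑ j, M i j * (αs j + 0 * w j))
              + (αs i + 0 * w i) * ∑ j, M i j * w j)) 0 := by
      rw [hφeq]
      exact hsum1.add (hQ.const_mul (γ / 2))
    have hzero := hloc.hasDerivAt_eq_zero hder
    have : (∑ i, (B i * Real.exp (αs i) - μ i) * w i)
        + γ / 2 * ((∑ i, w i * ∑ j, M i j * αs j) + ∑ i, αs i * ∑ j, M i j * w j) =
        (∑ i, (B i * (Real.exp (αs i + 0 * w i) * w i) - μ i * w i))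
          + γ / 2 * ∑ i, (w i * (∑ j, M i j * (αs j + 0 * w j))
              + (αs i + 0 * w i) * ∑ j, M i j * w j) := by
      rw [Finset.sum_add_distrib]
      congr 1
      · apply Finset.sum_congr rfl; intro i _; simp; ring
      · congr 2 <;> (apply Finset.sum_congr rfl; intro i _; simp)
    rw [this, hzero]
  -- symmetry of M
  have hsymm : ∀ i j, M i j = M j i := by
    intro i j
    have := hM.1
    have := congrFun (congrFun this j) i
    simpa [Matrix.conjTranspose_apply] using this
  have hswap : ∑ i, αs i * ∑ j, M i j * δ j = ∑ i, δ i * ∑ j, M i j * αs j := by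
    simp_rw [Finset.mul_sum]
    rw [Finset.sum_comm]
    apply Finset.sum_congr rfl; intro i _
    apply Finset.sum_congr rfl; intro j _
    rw [hsymm j i]; ring
  have gradδ := grad δ
  rw [hswap] at gradδ
  -- gradδ : ∑ i, (B i * exp (αs i) - μ i) * δ i + γ/2 * (T + T) = 0 where T = ∑ δ i * (Mαs)_i
  set T : ℝ := ∑ i, δ i * ∑ j, M i j * αs j with hT
  have hkey : ∑ i, (B i * Real.exp (αs i) - μ i) * δ i = -(γ * T) := by
    have : γ / 2 * (T + T) = γ * T := by ring
    linarith [gradδ, this.symm ▸ gradδ]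
  -- decompose T
  have hTdec : T = (∑ i, δ i * ∑ j, M i j * αd j) + ∑ i, δ i * ∑ j, M i j * δ j := by
    rw [hT, ← Finset.sum_add_distrib]
    apply Finset.sum_congr rfl; intro i _
    rw [← mul_add, ← Finset.sum_add_distrib]
    congr 1
    apply Finset.sum_congr rfl; intro j _
    simp [hδ]; ring
  have hPSD : 0 ≤ ∑ i, δ i * ∑ j, M i j * δ j := by
    have := hM.dotProduct_mulVec_nonneg δ
    simpa [dotProduct, Matrix.mulVec] using this
  -- lower bound on the LHS
  have hc_le : ∀ i : Fin n, c ≤ B i * min (Real.exp (αs i)) (Real.exp (αd i)) :=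
    fun i => Finset.inf'_le _ (Finset.mem_univ i)
  have hcpos : 0 < c := by
    rw [hc]
    apply (Finset.lt_inf'_iff _).mpr
    intro i _
    exact mul_pos (hB i) (lt_min (Real.exp_pos _) (Real.exp_pos _))
  have hlow : c * ∑ i, δ i ^ 2 ≤ ∑ i, (B i * Real.exp (αs i) - μ i) * δ i := by
    rw [Finset.mul_sum]
    apply Finset.sum_le_sum
    intro i _
    have h1 : c * δ i ^ 2 ≤ (B i * min (Real.exp (αs i)) (Real.exp (αd i))) * δ i ^ 2 :=
      mul_le_mul_of_nonneg_right (hc_le i) (sq_nonneg _)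
    have h2 := key_exp (αs i) (αd i)
    have h3 : (B i * min (Real.exp (αs i)) (Real.exp (αd i))) * δ i ^ 2
        ≤ B i * ((Real.exp (αs i) - Real.exp (αd i)) * (αs i - αd i)) := by
      have := mul_le_mul_of_nonneg_left h2 (hB i).le
      calc (B i * min (Real.exp (αs i)) (Real.exp (αd i))) * δ i ^ 2
          = B i * (min (Real.exp (αs i)) (Real.exp (αd i)) * (αs i - αd i) ^ 2) := by
            simp [hδ]; ring
        _ ≤ _ := this
    calc c * δ i ^ 2 ≤ _ := h1
      _ ≤ B i * ((Real.exp (αs i) - Real.exp (αd i)) * (αs i - αd i)) := h3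
      _ = (B i * Real.exp (αs i) - μ i) * δ i := by rw [hμ]; simp [hδ]; ring
  -- Cauchy-Schwarz on the cross term
  set S : ℝ := Real.sqrt (∑ i, δ i ^ 2) with hSdef
  set N : ℝ := Real.sqrt (∑ i, ((M *ᵥ αd) i) ^ 2) with hNdef
  have hS0 : 0 ≤ S := Real.sqrt_nonneg _
  have hN0 : 0 ≤ N := Real.sqrt_nonneg _
  have hCS : -(∑ i, δ i * ∑ j, M i j * αd j) ≤ S * N := by
    have h := Finset.sum_mul_sq_le_sq_mul_sq Finset.univ (fun i => -δ i) (fun i => (M *ᵥ αd) i)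
    have h2 : (∑ i, (-δ i) * (M *ᵥ αd) i) ≤ S * N := by
      have hle : (∑ i, (-δ i) * (M *ᵥ αd) i)^2 ≤ (S * N)^2 := by
        have : (S * N)^2 = (∑ i, δ i ^ 2) * (∑ i, ((M *ᵥ αd) i) ^ 2) := by
          rw [mul_pow, hSdef, hNdef, Real.sq_sqrt (by positivity), Real.sq_sqrt (by positivity)]
        rw [this]
        simpa [neg_pow] using h
      have h3 : |∑ i, (-δ i) * (M *ᵥ αd) i| ≤ S * N := by
        rw [← Real.sqrt_sq_eq_abs]
        calc Real.sqrt ((∑ i, (-δ i) * (M *ᵥ αd) i) ^ 2)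
            ≤ Real.sqrt ((S * N) ^ 2) := Real.sqrt_le_sqrt hle
          _ = S * N := Real.sqrt_sq (by positivity)
      exact (le_abs_self _).trans h3
    calc -(∑ i, δ i * ∑ j, M i j * αd j) = ∑ i, (-δ i) * (M *ᵥ αd) i := by
          rw [← Finset.sum_neg_distrib]
          apply Finset.sum_congr rfl; intro i _
          simp [Matrix.mulVec, dotProduct]
      _ ≤ S * N := h2
  -- put it together
  have hchain : c * S ^ 2 ≤ γ * (S * N) := by
    have hSsq : S ^ 2 = ∑ i, δ i ^ 2 := Real.sq_sqrt (by positivity)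
    rw [hSsq]
    calc c * ∑ i, δ i ^ 2 ≤ ∑ i, (B i * Real.exp (αs i) - μ i) * δ i := hlow
      _ = -(γ * T) := hkey
      _ ≤ -(γ * (∑ i, δ i * ∑ j, M i j * αd j)) := by
          rw [hTdec]
          have := mul_nonneg hγ hPSD
          nlinarith
      _ ≤ γ * (S * N) := by
          have := mul_le_mul_of_nonneg_left hCS hγ
          linarith
  -- conclude
  show S ≤ γ * N / c
  rcases eq_or_lt_of_le hS0 with h0 | h0
  · rw [← h0]
    positivity
  · rw [le_div_iff₀ hcpos]
    have : c * S * S ≤ γ * N * S := by nlinarith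
    exact le_of_mul_le_mul_right (by linarith) h0
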